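/- arXiv:2010.11879 — 2 statements merged into one kernel-verified Lean document; each statement's English description precedes it below -/
import Mathlib

section
/- Let A be the block lower bidiagonal matrix of sequential time-stepping (identity diagonal, subdiagonal blocks −Φ_ℓ), partitioned with every k-th point a C-point. Then the Schur complement of A obtained by eliminating all F-points is itself block lower bidiagonal with identity diagonal blocks and subdiagonal blocks −Φ_{ik}Φ_{ik−1}⋯Φ_{(i−1)k+1}, i.e., the coarse-grid operator steps k fine steps at a time. -/
private lemma blk_eq {k a b x y : ℕ} (hx : x < k) (hy : y < k) :
    a * k + x = b * k + y ↔ a = b ∧ x = y := by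
  constructor
  · intro h
    have hk : 0 < k := by omega
    have h1 : ∀ x a : ℕ, x < k → (a * k + x) / k = a := by
      intro x a hx
      rw [Nat.add_comm, Nat.add_mul_div_right _ _ hk, Nat.div_eq_of_lt hx, Nat.zero_add]
    have ha : a = b := by rw [← h1 x a hx, ← h1 y b hy, h]
    subst ha
    exact ⟨rfl, by omega⟩
  · rintro ⟨rfl, rfl⟩; rfl

private lemma blk_eq_k {k a b x : ℕ} (hx : x < k) :
    a * k + x = b * k + k ↔ a = b + 1 ∧ x = 0 := by
  have h : b * k + k = (b+1) * k + 0 := by ring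
  rw [h, blk_eq hx (by omega)]

private def Pprod {R : Type*} [Ring R] (Φ' : ℕ → R) (s n : ℕ) : R :=
  ((List.range n).map (fun t => Φ' (s - t))).prod

private lemma Pprod_zero {R : Type*} [Ring R] (Φ' : ℕ → R) (s : ℕ) :
    Pprod Φ' s 0 = 1 := by simp [Pprod]

private lemma Pprod_succ_head {R : Type*} [Ring R] (Φ' : ℕ → R) (s n : ℕ) :
    Pprod Φ' s (n+1) = Φ' s * Pprod Φ' (s-1) n := by
  unfold Pprod
  rw [List.range_succ_eq_map]
  simp only [List.map_cons, List.prod_cons, Nat.sub_zero, List.map_map]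
  have : ((fun t => Φ' (s - t)) ∘ Nat.succ) = fun t => Φ' (s - 1 - t) := by
    funext t
    simp only [Function.comp_apply]
    congr 1
    omega
  rw [this]

private lemma Pprod_succ_tail {R : Type*} [Ring R] (Φ' : ℕ → R) (s n : ℕ) :
    Pprod Φ' s (n+1) = Pprod Φ' s n * Φ' (s - n) := by
  unfold Pprod
  rw [List.range_succ]
  simp

private theorem aux {R : Type*} [Ring R] {Nc k N : ℕ} (hk : 0 < k) (hNc : 2 ≤ Nc)
    (hN : N = (Nc - 1) * k + 1) (Φ' : ℕ → R)
    (A : Matrix (Fin N) (Fin N) R)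
    (hA : ∀ i j : Fin N, A i j =
      if (i:ℕ) = (j:ℕ) then 1 else if (i:ℕ) = (j:ℕ) + 1 then -Φ' (i:ℕ) else 0)
    (c : Fin Nc → Fin N) (hc : ∀ i, (c i : ℕ) = (i:ℕ) * k)
    (f : Fin (Nc - 1) × Fin (k - 1) → Fin N)
    (hf : ∀ p, (f p : ℕ) = (p.1:ℕ) * k + (p.2:ℕ) + 1)
    (Aff_inv : Matrix (Fin (Nc - 1) × Fin (k - 1)) (Fin (Nc - 1) × Fin (k - 1)) R)
    (hinv : A.submatrix f f * Aff_inv = 1 ∧ Aff_inv * A.submatrix f f = 1) :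
    ∀ i j : Fin Nc,
      (A.submatrix c c - A.submatrix c f * Aff_inv * A.submatrix f c) i j
        = if (i:ℕ) = (j:ℕ) then 1 else if (i:ℕ) = (j:ℕ) + 1 then
            -(Pprod Φ' ((i:ℕ) * k) k)
          else 0 := by
  -- entry computations
  have hAcc : ∀ i j : Fin Nc, A (c i) (c j) =
      if (i:ℕ) = (j:ℕ) then 1
      else if k = 1 ∧ (i:ℕ) = (j:ℕ) + 1 then -Φ' ((i:ℕ) * k) else 0 := by
    intro i j
    rw [hA, hc, hc]
    have h1 : (i:ℕ) * k = (j:ℕ) * k ↔ (i:ℕ) = (j:ℕ) := by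
      have := blk_eq (k := k) (a := (i:ℕ)) (b := (j:ℕ)) (x := 0) (y := 0) hk hk
      omega
    have h2 : (i:ℕ) * k = (j:ℕ) * k + 1 ↔ (k = 1 ∧ (i:ℕ) = (j:ℕ) + 1) := by
      constructor
      · intro h
        rcases Nat.lt_or_ge k 2 with hk2 | hk2
        · have hk1 : k = 1 := by omega
          subst hk1
          have := blk_eq_k (k := 1) (a := (i:ℕ)) (b := (j:ℕ)) (x := 0) (by omega)
          omega
        · have := blk_eq (k := k) (a := (i:ℕ)) (b := (j:ℕ)) (x := 0) (y := 1) hk hk2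
          omega
      · rintro ⟨hk1, hij⟩
        subst hk1
        have := blk_eq_k (k := 1) (a := (i:ℕ)) (b := (j:ℕ)) (x := 0) (by omega)
        omega
    split_ifs with a1 a2 a3 a4 a5 <;> first | rfl | (exfalso; omega) | omega
  have hAcf : ∀ (i : Fin Nc) (p : Fin (Nc - 1) × Fin (k - 1)), A (c i) (f p) =
      if (i:ℕ) = (p.1:ℕ) + 1 ∧ (p.2:ℕ) = k - 2 then -Φ' ((i:ℕ) * k) else 0 := by
    intro i p
    have h2 := p.2.isLt
    rw [hA, hc, hf]
    have hne1 : ¬ ((i:ℕ) * k = (p.1:ℕ) * k + (p.2:ℕ) + 1) := by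
      intro h
      have := (blk_eq (k := k) (a := (i:ℕ)) (b := (p.1:ℕ)) (x := 0) (y := (p.2:ℕ) + 1)
        hk (by omega)).mp (by omega)
      omega
    have h3 : ((i:ℕ) * k = (p.1:ℕ) * k + (p.2:ℕ) + 1 + 1) ↔
        ((i:ℕ) = (p.1:ℕ) + 1 ∧ (p.2:ℕ) = k - 2) := by
      constructor
      · intro h
        by_cases hp2 : (p.2:ℕ) + 2 = k
        · have := (blk_eq_k (k := k) (a := (i:ℕ)) (b := (p.1:ℕ)) (x := 0) hk).mp (by omega)
          omega
        · have := (blk_eq (k := k) (a := (i:ℕ)) (b := (p.1:ℕ)) (x := 0) (y := (p.2:ℕ) + 2)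
            hk (by omega)).mp (by omega)
          omega
      · rintro ⟨hi, hp2⟩
        have := (blk_eq_k (k := k) (a := (i:ℕ)) (b := (p.1:ℕ)) (x := 0) hk).mpr (by omega)
        omega
    rw [if_neg hne1, if_congr h3 rfl rfl]
  have hAfc : ∀ (q : Fin (Nc - 1) × Fin (k - 1)) (j : Fin Nc), A (f q) (c j) =
      if (q.1:ℕ) = (j:ℕ) ∧ (q.2:ℕ) = 0 then -Φ' ((j:ℕ) * k + 1) else 0 := by
    intro q j
    have h2 := q.2.isLt
    rw [hA, hf, hc]
    have hne1 : ¬ ((q.1:ℕ) * k + (q.2:ℕ) + 1 = (j:ℕ) * k) := by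
      intro h
      have := (blk_eq (k := k) (a := (q.1:ℕ)) (b := (j:ℕ)) (x := (q.2:ℕ) + 1) (y := 0)
        (by omega) hk).mp (by omega)
      omega
    have h3 : ((q.1:ℕ) * k + (q.2:ℕ) + 1 = (j:ℕ) * k + 1) ↔
        ((q.1:ℕ) = (j:ℕ) ∧ (q.2:ℕ) = 0) := by
      have := blk_eq (k := k) (a := (q.1:ℕ)) (b := (j:ℕ)) (x := (q.2:ℕ) + 1) (y := 1)
        (by omega) (by omega)
      omega
    rw [if_neg hne1, if_congr h3 rfl rfl]
    split_ifs with h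
    · have : (q.1:ℕ) * k + (q.2:ℕ) + 1 = (j:ℕ) * k + 1 := by
        have hq : (q.1:ℕ) * k = (j:ℕ) * k := by rw [h.1]
        omega
      rw [this]
    · rfl
  have hAff : ∀ p q : Fin (Nc - 1) × Fin (k - 1), A.submatrix f f p q =
      if p = q then 1
      else if (p.1:ℕ) = (q.1:ℕ) ∧ (p.2:ℕ) = (q.2:ℕ) + 1 then
        -Φ' ((p.1:ℕ) * k + (p.2:ℕ) + 1) else 0 := by
    intro p q
    have hp2 := p.2.isLt
    have hq2 := q.2.isLt
    rw [Matrix.submatrix_apply, hA, hf, hf]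
    have h1 : ((p.1:ℕ) * k + (p.2:ℕ) + 1 = (q.1:ℕ) * k + (q.2:ℕ) + 1) ↔ p = q := by
      rw [Prod.ext_iff, Fin.ext_iff, Fin.ext_iff]
      have := blk_eq (k := k) (a := (p.1:ℕ)) (b := (q.1:ℕ)) (x := (p.2:ℕ) + 1)
        (y := (q.2:ℕ) + 1) (by omega) (by omega)
      omega
    have h2 : ((p.1:ℕ) * k + (p.2:ℕ) + 1 = (q.1:ℕ) * k + (q.2:ℕ) + 1 + 1) ↔
        ((p.1:ℕ) = (q.1:ℕ) ∧ (p.2:ℕ) = (q.2:ℕ) + 1) := by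
      constructor
      · intro h
        by_cases hq : (q.2:ℕ) + 2 = k
        · have := (blk_eq_k (k := k) (a := (p.1:ℕ)) (b := (q.1:ℕ)) (x := (p.2:ℕ) + 1)
            (by omega)).mp (by omega)
          omega
        · have := (blk_eq (k := k) (a := (p.1:ℕ)) (b := (q.1:ℕ)) (x := (p.2:ℕ) + 1)
            (y := (q.2:ℕ) + 2) (by omega) (by omega)).mp (by omega)
          omega
      · rintro ⟨ha, hb⟩
        have := (blk_eq (k := k) (a := (p.1:ℕ)) (b := (q.1:ℕ)) (x := (p.2:ℕ) + 1)
          (y := (q.2:ℕ) + 2) (by omega) (by omega)).mpr (by omega)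
        omega
    rw [if_congr h1 rfl rfl, if_congr h2 rfl rfl]
  -- the explicit inverse of A_ff
  set B : Matrix (Fin (Nc - 1) × Fin (k - 1)) (Fin (Nc - 1) × Fin (k - 1)) R :=
    fun p q => if p.1 = q.1 ∧ (q.2:ℕ) ≤ (p.2:ℕ) then
      Pprod Φ' ((p.1:ℕ) * k + (p.2:ℕ) + 1) ((p.2:ℕ) - (q.2:ℕ)) else 0 with hBdef
  have hAffB : A.submatrix f f * B = 1 := by
    ext p q
    rw [Matrix.mul_apply, Matrix.one_apply]
    have hsplit : ∀ r : Fin (Nc - 1) × Fin (k - 1),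
        A.submatrix f f p r * B r q =
          (if r = p then B p q else 0) +
          (if (r.1:ℕ) = (p.1:ℕ) ∧ (r.2:ℕ) + 1 = (p.2:ℕ) then
            -Φ' ((p.1:ℕ) * k + (p.2:ℕ) + 1) * B r q else 0) := by
      intro r
      rw [hAff]
      by_cases h1 : p = r
      · subst h1
        rw [if_pos rfl, one_mul, if_pos rfl, if_neg (by omega), add_zero]
      · rw [if_neg h1]
        by_cases h2 : (p.1:ℕ) = (r.1:ℕ) ∧ (p.2:ℕ) = (r.2:ℕ) + 1
        · rw [if_pos h2, if_neg (fun hh : r = p => h1 hh.symm),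
            if_pos (⟨h2.1.symm, by omega⟩ : (r.1:ℕ) = (p.1:ℕ) ∧ (r.2:ℕ) + 1 = (p.2:ℕ)),
            zero_add]
        · rw [if_neg h2, if_neg (fun hh : r = p => h1 hh.symm),
            if_neg (fun hh : (r.1:ℕ) = (p.1:ℕ) ∧ (r.2:ℕ) + 1 = (p.2:ℕ) =>
              h2 ⟨hh.1.symm, by omega⟩), zero_add, zero_mul]
    rw [Finset.sum_congr rfl (fun r _ => hsplit r), Finset.sum_add_distrib,
      Finset.sum_ite_eq' Finset.univ p (fun _ => B p q), if_pos (Finset.mem_univ p)]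
    by_cases hp2 : (p.2:ℕ) = 0
    · rw [Finset.sum_eq_zero (fun r _ => by rw [if_neg (by omega)]), add_zero]
      simp only [hBdef]
      by_cases hq : p.1 = q.1 ∧ (q.2:ℕ) ≤ (p.2:ℕ)
      · have hpq : p = q := Prod.ext_iff.mpr ⟨hq.1, Fin.ext (by omega)⟩
        rw [if_pos hq, if_pos hpq, show (p.2:ℕ) - (q.2:ℕ) = 0 by omega, Pprod_zero]
      · rw [if_neg hq, if_neg (fun h => hq ⟨by rw [h], by rw [h]⟩)]
    · have hr0 : ((p.2:ℕ) - 1) < k - 1 := by have := p.2.isLt; omega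
      set r0 : Fin (Nc - 1) × Fin (k - 1) := (p.1, ⟨(p.2:ℕ) - 1, hr0⟩) with hr0def
      have hone : ∀ r ∈ Finset.univ, r ≠ r0 →
          (if (r.1:ℕ) = (p.1:ℕ) ∧ (r.2:ℕ) + 1 = (p.2:ℕ) then
            -Φ' ((p.1:ℕ) * k + (p.2:ℕ) + 1) * B r q else 0) = 0 := by
        intro r _ hr
        apply if_neg
        rintro ⟨h1, h2⟩
        apply hr
        rw [hr0def]
        exact Prod.ext_iff.mpr ⟨Fin.ext h1, Fin.ext (show (r.2:ℕ) = (p.2:ℕ) - 1 by omega)⟩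
      rw [Finset.sum_eq_single r0 hone (fun h => absurd (Finset.mem_univ r0) h),
        if_pos (⟨rfl, show ((p.2:ℕ) - 1) + 1 = (p.2:ℕ) by omega⟩ :
          (r0.1:ℕ) = (p.1:ℕ) ∧ (r0.2:ℕ) + 1 = (p.2:ℕ))]
      simp only [hBdef, hr0def]
      by_cases hq1 : p.1 = q.1
      · by_cases hle : (q.2:ℕ) ≤ (p.2:ℕ) - 1
        · rw [if_pos ⟨hq1, by omega⟩, if_pos ⟨hq1, hle⟩,
            if_neg (fun h : p = q => by subst h; omega)]
          have e1 : (p.1:ℕ) * k + ((p.2:ℕ) - 1) + 1 = ((p.1:ℕ) * k + (p.2:ℕ) + 1) - 1 := by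
            omega
          have e2 : (p.2:ℕ) - (q.2:ℕ) = ((p.2:ℕ) - 1 - (q.2:ℕ)) + 1 := by omega
          rw [e1, e2, Pprod_succ_head, neg_mul]
          exact add_neg_cancel _
        · by_cases he : (p.2:ℕ) = (q.2:ℕ)
          · rw [if_pos ⟨hq1, by omega⟩,
              if_neg (fun h : p.1 = q.1 ∧ (q.2:ℕ) ≤ (p.2:ℕ) - 1 => absurd h.2 (by omega)),
              show (p.2:ℕ) - (q.2:ℕ) = 0 by omega, Pprod_zero, mul_zero, add_zero,
              if_pos (Prod.ext_iff.mpr ⟨hq1, Fin.ext he⟩)]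
          · rw [if_neg (fun h : p.1 = q.1 ∧ (q.2:ℕ) ≤ (p.2:ℕ) => absurd h.2 (by omega)),
              if_neg (fun h : p.1 = q.1 ∧ (q.2:ℕ) ≤ (p.2:ℕ) - 1 => absurd h.2 (by omega)),
              if_neg (fun h : p = q => he (by rw [h])), mul_zero, add_zero]
      · rw [if_neg (fun h : p.1 = q.1 ∧ (q.2:ℕ) ≤ (p.2:ℕ) => hq1 h.1),
          if_neg (fun h : p.1 = q.1 ∧ (q.2:ℕ) ≤ (p.2:ℕ) - 1 => hq1 h.1),
          if_neg (fun h : p = q => hq1 (by rw [h])), mul_zero, add_zero]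
  have hB : Aff_inv = B := by
    calc Aff_inv = Aff_inv * (A.submatrix f f * B) := by rw [hAffB, Matrix.mul_one]
    _ = (Aff_inv * A.submatrix f f) * B := by rw [Matrix.mul_assoc]
    _ = B := by rw [hinv.2, Matrix.one_mul]
  intro i j
  rw [Matrix.sub_apply, Matrix.submatrix_apply, hAcc, hB]
  by_cases hij : (i:ℕ) = (j:ℕ) + 1
  · by_cases hk1 : k = 1
    · subst hk1
      have hzero : (A.submatrix c f * B * A.submatrix f c) i j = 0 := by
        rw [Matrix.mul_apply]
        exact Finset.sum_eq_zero (fun q _ => absurd q.2.2 (by omega))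
      rw [hzero, sub_zero]
      have h1 : ¬ (i:ℕ) = (j:ℕ) := by omega
      rw [if_neg h1, if_pos (⟨rfl, hij⟩ : (1:ℕ) = 1 ∧ (i:ℕ) = (j:ℕ) + 1),
        if_neg h1, if_pos hij]
      have hP1 : Pprod Φ' ((i:ℕ) * 1) 1 = Φ' ((i:ℕ) * 1) := by
        have h := Pprod_succ_tail Φ' ((i:ℕ) * 1) 0
        rw [Pprod_zero, one_mul, Nat.sub_zero] at h
        exact h
      rw [hP1]
    · have hk2 : 2 ≤ k := by omega
      have hj1 : (j:ℕ) < Nc - 1 := by have := i.isLt; omega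
      have h0k : 0 < k - 1 := by omega
      have hk2' : k - 2 < k - 1 := by omega
      have hBv : B (⟨(j:ℕ), hj1⟩, ⟨k - 2, hk2'⟩) (⟨(j:ℕ), hj1⟩, ⟨0, h0k⟩)
          = Pprod Φ' ((j:ℕ) * k + (k - 2) + 1) (k - 2) := by
        simp [hBdef]
      have hstep : (A.submatrix c f * B * A.submatrix f c) i j =
          Φ' ((i:ℕ) * k) * Pprod Φ' ((j:ℕ) * k + (k - 2) + 1) (k - 2)
            * Φ' ((j:ℕ) * k + 1) := by
        have hqz : ∀ q ∈ Finset.univ, q ≠ ((⟨(j:ℕ), hj1⟩, ⟨0, h0k⟩) :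
            Fin (Nc - 1) × Fin (k - 1)) →
            (A.submatrix c f * B) i q * A.submatrix f c q j = 0 := by
          intro q _ hqne
          rw [Matrix.submatrix_apply, hAfc, if_neg, mul_zero]
          rintro ⟨h1, h2⟩
          exact hqne (Prod.ext_iff.mpr ⟨Fin.ext h1, Fin.ext h2⟩)
        have hpz : ∀ p ∈ Finset.univ, p ≠ ((⟨(j:ℕ), hj1⟩, ⟨k - 2, hk2'⟩) :
            Fin (Nc - 1) × Fin (k - 1)) →
            A.submatrix c f i p * B p (⟨(j:ℕ), hj1⟩, ⟨0, h0k⟩) = 0 := by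
          intro p _ hpne
          rw [Matrix.submatrix_apply, hAcf, if_neg, zero_mul]
          rintro ⟨h1, h2⟩
          exact hpne (Prod.ext_iff.mpr
            ⟨Fin.ext (show (p.1:ℕ) = (j:ℕ) by omega), Fin.ext h2⟩)
        rw [Matrix.mul_apply,
          Finset.sum_eq_single _ hqz (fun h => absurd (Finset.mem_univ _) h),
          Matrix.mul_apply,
          Finset.sum_eq_single _ hpz (fun h => absurd (Finset.mem_univ _) h),
          Matrix.submatrix_apply, hAcf, Matrix.submatrix_apply, hAfc,
          if_pos (⟨hij, rfl⟩ :
            (i:ℕ) = ((⟨(j:ℕ), hj1⟩ : Fin (Nc - 1)):ℕ) + 1 ∧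
              ((⟨k - 2, hk2'⟩ : Fin (k - 1)):ℕ) = k - 2),
          if_pos (⟨rfl, rfl⟩ :
            ((⟨(j:ℕ), hj1⟩ : Fin (Nc - 1)):ℕ) = (j:ℕ) ∧
              ((⟨0, h0k⟩ : Fin (k - 1)):ℕ) = 0),
          hBv, mul_neg, neg_mul, neg_mul, neg_neg]
      rw [hstep]
      have h1 : ¬ (i:ℕ) = (j:ℕ) := by omega
      rw [if_neg h1, if_neg (fun h : k = 1 ∧ (i:ℕ) = (j:ℕ) + 1 => hk1 h.1),
        if_neg h1, if_pos hij]
      have hik : (i:ℕ) * k = (j:ℕ) * k + k := by rw [hij, Nat.add_mul, Nat.one_mul]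
      have key : ∀ n, n + 2 = k → Pprod Φ' ((i:ℕ) * k) (n + 2)
          = Φ' ((i:ℕ) * k) * Pprod Φ' ((j:ℕ) * k + (k - 2) + 1) (k - 2)
            * Φ' ((j:ℕ) * k + 1) := by
        intro n hn
        have hn2 : n = k - 2 := by omega
        subst hn2
        have e2 : (i:ℕ) * k - 1 = (j:ℕ) * k + (k - 2) + 1 := by omega
        have e3 : (j:ℕ) * k + (k - 2) + 1 - (k - 2) = (j:ℕ) * k + 1 := by omega
        rw [show k - 2 + 2 = (k - 2 + 1) + 1 from rfl, Pprod_succ_head,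
          Pprod_succ_tail, e2, e3, ← mul_assoc]
      have hkey := key (k - 2) (by omega)
      rw [show k - 2 + 2 = k from by omega] at hkey
      rw [← hkey, zero_sub]
  · have hzero : (A.submatrix c f * B * A.submatrix f c) i j = 0 := by
      have houter : ∀ q ∈ Finset.univ,
          (A.submatrix c f * B) i q * A.submatrix f c q j = 0 := by
        intro q _
        by_cases hq : (q.1:ℕ) = (j:ℕ) ∧ (q.2:ℕ) = 0
        · have hinner : ∀ p ∈ Finset.univ, A.submatrix c f i p * B p q = 0 := by
            intro p _
            rw [Matrix.submatrix_apply, hAcf]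
            by_cases hp : (i:ℕ) = (p.1:ℕ) + 1 ∧ (p.2:ℕ) = k - 2
            · have hBz : B p q = 0 := by
                simp only [hBdef]
                apply if_neg
                rintro ⟨hx, -⟩
                have hx' : (p.1:ℕ) = (q.1:ℕ) := by rw [hx]
                omega
              rw [if_pos hp, hBz, mul_zero]
            · rw [if_neg hp, zero_mul]
          rw [Matrix.mul_apply, Finset.sum_eq_zero hinner, zero_mul]
        · rw [Matrix.submatrix_apply, hAfc, if_neg hq, mul_zero]
      rw [Matrix.mul_apply, Finset.sum_eq_zero houter]
    rw [hzero, sub_zero]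
    by_cases he : (i:ℕ) = (j:ℕ)
    · rw [if_pos he, if_pos he]
    · rw [if_neg he, if_neg he,
        if_neg (fun h : k = 1 ∧ (i:ℕ) = (j:ℕ) + 1 => hij h.2), if_neg hij]

theorem stmt_16 {R : Type*} [Ring R] {Nc k N : ℕ} (hk : 0 < k) (hNc : 2 ≤ Nc)
    (hN : N = (Nc - 1) * k + 1) (Φ : Fin N → R)
    (A : Matrix (Fin N) (Fin N) R)
    (hA : ∀ i j : Fin N, A i j =
      if i = j then 1 else if (i:ℕ) = (j:ℕ) + 1 then -Φ i else 0)
    (c : Fin Nc → Fin N) (hc : ∀ i, (c i : ℕ) = (i:ℕ) * k)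
    (f : Fin (Nc - 1) × Fin (k - 1) → Fin N)
    (hf : ∀ p, (f p : ℕ) = (p.1:ℕ) * k + (p.2:ℕ) + 1)
    (Aff_inv : Matrix (Fin (Nc - 1) × Fin (k - 1)) (Fin (Nc - 1) × Fin (k - 1)) R)
    (hinv : A.submatrix f f * Aff_inv = 1 ∧ Aff_inv * A.submatrix f f = 1) :
    ∀ i j : Fin Nc,
      (A.submatrix c c - A.submatrix c f * Aff_inv * A.submatrix f c) i j
        = if i = j then 1 else if (i:ℕ) = (j:ℕ) + 1 then
            -(((List.range k).map (fun t => Φ ⟨(i:ℕ) * k - t, by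
                have h1 : (i:ℕ) * k ≤ (Nc - 1) * k :=
                  Nat.mul_le_mul_right k (by have := i.isLt; omega)
                omega⟩)).prod)
          else 0 := by
  intro i j
  have hA' : ∀ a b : Fin N, A a b =
      if (a:ℕ) = (b:ℕ) then 1 else if (a:ℕ) = (b:ℕ) + 1 then
        -(fun n => if h : n < N then Φ ⟨n, h⟩ else 0) (a:ℕ) else 0 := by
    intro a b
    rw [hA]
    by_cases h : (a:ℕ) = (b:ℕ)
    · rw [if_pos (Fin.ext h), if_pos h]
    · rw [if_neg (fun hh => h (by rw [hh])), if_neg h]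
      by_cases h2 : (a:ℕ) = (b:ℕ) + 1
      · rw [if_pos h2, if_pos h2]
        have : (fun n => if h : n < N then Φ ⟨n, h⟩ else 0) (a:ℕ) = Φ a := by
          simp only [dif_pos a.isLt, Fin.eta]
        rw [this]
      · rw [if_neg h2, if_neg h2]
  have key := aux hk hNc hN (fun n => if h : n < N then Φ ⟨n, h⟩ else 0) A hA'
    c hc f hf Aff_inv hinv i j
  rw [key]
  by_cases h : (i:ℕ) = (j:ℕ)
  · rw [if_pos h, if_pos (Fin.ext h)]
  · rw [if_neg h, if_neg (fun hh : i = j => h (congrArg Fin.val hh))]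
    by_cases h2 : (i:ℕ) = (j:ℕ) + 1
    · rw [if_pos h2, if_pos h2]
      unfold Pprod
      congr 1
      congr 1
      apply List.map_congr_left
      intro t ht
      have htk : t < k := List.mem_range.mp ht
      have hlt : (i:ℕ) * k - t < N := by
        have h1 : (i:ℕ) * k ≤ (Nc - 1) * k :=
          Nat.mul_le_mul_right k (by have := i.isLt; omega)
        omega
      exact dif_pos hlt
    · rw [if_neg h2, if_neg h2]
end

section
/- Suppose for each coarse eigenpair the inequality |μ_j − λ_j^k| ≤ φ · (1 − |μ_j|) holds with 0 ≤ φ and |μ_j| < 1, where λ_j, μ_j are eigenvalues of simultaneously diagonalizable Φ and Ψ with eigenvector matrix U. Then for the block diagonal operators on the coarse grid, ‖(Ψ − Φ^k) v‖ ≤ φ · (‖v‖ − ‖Ψ v‖) holds for every eigenvector v of the common eigenbasis, and hence the F-relaxation temporal approximation property holds with constant φ on the span of each eigenvector. -/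
open Real

theorem stmt_17 {n : ℕ} (Φ Ψ U : Matrix (Fin n) (Fin n) ℂ) (hU : IsUnit U.det)
    (lam mu : Fin n → ℂ)
    (hΦ : Φ * U = U * Matrix.diagonal lam) (hΨ : Ψ * U = U * Matrix.diagonal mu)
    (k : ℕ) (hk : 1 ≤ k) (φ : ℝ) (hφ : 0 ≤ φ)
    (hmu : ∀ j, ‖mu j‖ < 1)
    (hineq : ∀ j, ‖mu j - (lam j)^k‖ ≤ φ * (1 - ‖mu j‖)) :
    ∀ (j : Fin n) (cc : ℂ) (v : EuclideanSpace ℂ (Fin n)), (∀ p, v p = cc * U p j) →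
      ‖Matrix.toEuclideanLin (Ψ - Φ^k) v‖
        ≤ φ * (‖v‖ - ‖Matrix.toEuclideanLin Ψ v‖) ∧
      ∀ x ∈ Set.Icc (0:ℝ) (2*π),
        ‖Matrix.toEuclideanLin (Ψ - Φ^k) v‖
          ≤ φ * ‖v - Complex.exp (x * Complex.I) • Matrix.toEuclideanLin Ψ v‖ := by
  intro j cc v hv
  have key : ∀ (M : Matrix (Fin n) (Fin n) ℂ) (d : Fin n → ℂ), M * U = U * Matrix.diagonal d →
      Matrix.toEuclideanLin M v = d j • v := by
    intro M d hMd
    ext p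
    have h1 : (Matrix.toEuclideanLin M v) p = ∑ q, M p q * v q := by
      simp [Matrix.toEuclideanLin_apply, Matrix.mulVec, dotProduct]
    have h2 : ∑ q, M p q * v q = cc * (M * U) p j := by
      rw [Matrix.mul_apply, Finset.mul_sum]
      exact Finset.sum_congr rfl fun q _ => by rw [hv q]; ring
    have h3 : (U * Matrix.diagonal d) p j = U p j * d j := by
      simp [Matrix.mul_diagonal]
    have : (d j • v) p = d j * v p := rfl
    rw [h1, h2, hMd, h3, this, hv p]
    ring
  have hΨv : Matrix.toEuclideanLin Ψ v = mu j • v := key Ψ mu hΨ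
  have hΦk : Φ ^ k * U = U * Matrix.diagonal (fun i => (lam i) ^ k) := by
    clear hk hineq
    induction k with
    | zero => simp
    | succ m ih =>
        have : Φ ^ (m + 1) * U = Φ ^ m * (Φ * U) := by
          rw [pow_succ]; rw [Matrix.mul_assoc]
        rw [this, hΦ, ← Matrix.mul_assoc, ih, Matrix.mul_assoc,
          Matrix.diagonal_mul_diagonal]
        congr 1
  have hdiff : Matrix.toEuclideanLin (Ψ - Φ ^ k) v = (mu j - lam j ^ k) • v := by
    exact key _ (fun i => mu i - lam i ^ k) (by
      rw [Matrix.sub_mul, hΨ, hΦk, ← Matrix.mul_sub]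
      congr 1
      rw [Matrix.diagonal_sub])
  have hnd : ‖Matrix.toEuclideanLin (Ψ - Φ ^ k) v‖ = ‖mu j - lam j ^ k‖ * ‖v‖ := by
    rw [hdiff, norm_smul]
  have hnΨ : ‖Matrix.toEuclideanLin Ψ v‖ = ‖mu j‖ * ‖v‖ := by
    rw [hΨv, norm_smul]
  have hvnn : (0:ℝ) ≤ ‖v‖ := norm_nonneg v
  have hmain : ‖mu j - lam j ^ k‖ * ‖v‖ ≤ φ * ((1 - ‖mu j‖) * ‖v‖) := by
    rw [← mul_assoc]
    exact mul_le_mul_of_nonneg_right (hineq j) hvnn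
  constructor
  · rw [hnd, hnΨ]
    calc ‖mu j - lam j ^ k‖ * ‖v‖ ≤ φ * ((1 - ‖mu j‖) * ‖v‖) := hmain
      _ = φ * (‖v‖ - ‖mu j‖ * ‖v‖) := by ring
  · intro x _
    rw [hnd, hΨv]
    have hsm : v - Complex.exp (x * Complex.I) • (mu j • v)
        = (1 - Complex.exp (x * Complex.I) * mu j) • v := by
      rw [sub_smul, one_smul, smul_smul]
    rw [hsm, norm_smul]
    have habs : 1 - ‖mu j‖ ≤ ‖1 - Complex.exp (x * Complex.I) * mu j‖ := by
      have h1 : ‖Complex.exp (x * Complex.I) * mu j‖ = ‖mu j‖ := by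
        rw [norm_mul, Complex.norm_exp_ofReal_mul_I, one_mul]
      calc 1 - ‖mu j‖
          = ‖(1:ℂ)‖ - ‖Complex.exp (x * Complex.I) * mu j‖ := by
            rw [h1, norm_one]
        _ ≤ ‖1 - Complex.exp (x * Complex.I) * mu j‖ := by
            simpa using
              norm_sub_norm_le (1 : ℂ) (Complex.exp (x * Complex.I) * mu j)
    calc ‖mu j - lam j ^ k‖ * ‖v‖ ≤ φ * ((1 - ‖mu j‖) * ‖v‖) := hmain
      _ ≤ φ * (‖1 - Complex.exp (x * Complex.I) * mu j‖ * ‖v‖) := by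
          apply mul_le_mul_of_nonneg_left (mul_le_mul_of_nonneg_right habs hvnn) hφ
end
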